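/- arXiv:2202.11788 — 3 statements merged into one kernel-verified Lean document; each statement's English description precedes it below -/
import Mathlib

section
/- Let d ≥ 2 and p : [n_1]×⋯×[n_d] → ℝ. For each k = 1,…,d−1 suppose the rank of the k-th unfolding matrix of p is r_k, and let Φ_k : [n_1]×⋯×[n_k]×[r_k] → ℝ be any function such that the column space of the matrix Φ_k((x_1,…,x_k); α_k) equals the column space of the k-th unfolding matrix of p. Consider the d matrix equations in the unknowns G_1 : [n_1]×[r_1] → ℝ, G_k : [r_{k−1}]×[n_k]×[r_k] → ℝ (2 ≤ k ≤ d−1), G_d : [r_{d−1}]×[n_d] → ℝ: (1) G_1(x_1,α_1) = Φ_1(x_1,α_1); (2) for k = 2,…,d−1, Σ_{α_{k−1}=1}^{r_{k−1}} Φ_{k−1}((x_1,…,x_{k−1}),α_{k−1}) G_k(α_{k−1},x_k,α_k) = Φ_k((x_1,…,x_k),α_k) for all x_1,…,x_k,α_k; (3) Σ_{α_{d−1}=1}^{r_{d−1}} Φ_{d−1}((x_1,…,x_{d−1}),α_{d−1}) G_d(α_{d−1},x_d) = p(x_1,…,x_d) for all x. Then each of these equations has a unique solution, and the solutions satisfy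 p(x_1,…,x_d) = Σ_{α_1=1}^{r_1}⋯Σ_{α_{d−1}=1}^{r_{d−1}} G_1(x_1,α_1) G_2(α_1,x_2,α_2) ⋯ G_d(α_{d−1},x_d) for all (x_1,…,x_d), i.e., G_1,…,G_d are cores of a tensor train representation of p of rank (r_1,…,r_{d−1}). -/
open scoped BigOperators
open Matrix

/-- Indices `(x_0, …, x_{k-1})` of the first `k` variables (sizes given by `n`). -/
abbrev PreIdx (n : ℕ → ℕ) (k : ℕ) := ∀ i : Fin k, Fin (n i)

/-- Indices `(x_k, …, x_{d-1})` of the variables with position `≥ k`. -/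
abbrev SufIdx (n : ℕ → ℕ) (d k : ℕ) := ∀ i : {i : Fin d // k ≤ (i : ℕ)}, Fin (n i)

/-- Indices of the variables with position in the window `[a, b)`. -/
abbrev MidIdx (n : ℕ → ℕ) (d a b : ℕ) :=
  ∀ i : {i : Fin d // a ≤ (i : ℕ) ∧ (i : ℕ) < b}, Fin (n i)

/-- Glue a prefix index and a suffix index into a full index. -/
def glue {n : ℕ → ℕ} {d k : ℕ} (x : PreIdx n k) (y : SufIdx n d k) : PreIdx n d :=
  fun i => if h : (i : ℕ) < k then x ⟨i, h⟩ else y ⟨i, Nat.le_of_not_lt h⟩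

/-- The `k`-th unfolding matrix of a `d`-dimensional tensor `p`. -/
def unfold {n : ℕ → ℕ} {d : ℕ} (p : PreIdx n d → ℝ) (k : ℕ) :
    Matrix (PreIdx n k) (SufIdx n d k) ℝ :=
  Matrix.of fun x y => p (glue x y)

/-- Column space of a matrix: span of its columns. -/
noncomputable def colSpace {R C : Type*} (M : Matrix R C ℝ) : Submodule ℝ (R → ℝ) :=
  Submodule.span ℝ (Set.range fun c => fun r => M r c)

/-- Row space of a matrix: span of its rows. -/
noncomputable def rowSpace {R C : Type*} (M : Matrix R C ℝ) : Submodule ℝ (C → ℝ) :=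
  Submodule.span ℝ (Set.range fun r => fun c => M r c)

/-- Rank of a matrix (dimension of its column space). -/
noncomputable def mrank {R C : Type*} (M : Matrix R C ℝ) : ℕ :=
  Module.finrank ℝ ↥(colSpace M)

/-- Restriction of a prefix index to the first `k` variables. -/
def takePre {n : ℕ → ℕ} {k : ℕ} (x : PreIdx n (k + 1)) : PreIdx n k :=
  fun i => x ⟨i, Nat.lt_succ_of_lt i.isLt⟩

/-- Extend a prefix index by one more variable. -/
def snoc' {n : ℕ → ℕ} {k : ℕ} (z : PreIdx n k) (a : Fin (n k)) : PreIdx n (k + 1) :=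
  fun i =>
    if h : (i : ℕ) < k then z ⟨i, h⟩
    else Fin.cast (congrArg n (by have := i.isLt; omega : k = (i : ℕ))) a

/-- A family of tensor-train cores: core `k` has shape `r k × n k × r (k+1)`.
(The first and last cores carry a dummy index of size `r 0 = 1`, `r d = 1`.) -/
abbrev CoreType (n r : ℕ → ℕ) (d : ℕ) :=
  ∀ k : Fin d, Fin (r k) → Fin (n k) → Fin (r ((k : ℕ) + 1)) → ℝ

/-- Partial contraction of the first `k` cores. -/
noncomputable def ttPrefixF {d : ℕ} {n r : ℕ → ℕ} (G : CoreType n r d) :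
    (k : ℕ) → k ≤ d → PreIdx n k → Fin (r 0) → Fin (r k) → ℝ
  | 0, _, _, a, b => if (a : ℕ) = (b : ℕ) then 1 else 0
  | k + 1, h, x, a, b =>
      ∑ c : Fin (r k),
        ttPrefixF G k (Nat.le_of_succ_le h) (takePre x) a c * G ⟨k, h⟩ c (x (Fin.last k)) b

/-- Full contraction `G_1 ∘ ⋯ ∘ G_d` of a family of tensor-train cores. -/
noncomputable def ttContract {d : ℕ} {n r : ℕ → ℕ} (G : CoreType n r d)
    (x : PreIdx n d) : ℝ :=
  ∑ a : Fin (r 0), ∑ b : Fin (r d), ttPrefixF G d le_rfl x a b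

/-- The recursively contracted left sketch functions `S_k` built from blocks `s_k`. -/
noncomputable def leftSketch {n m : ℕ → ℕ}
    (s : ∀ k : ℕ, Fin (m (k + 1)) → Fin (n k) → Fin (m k) → ℝ) :
    (k : ℕ) → Fin (m k) → PreIdx n k → ℝ
  | 0, _, _ => 1
  | k + 1, β, x => ∑ c : Fin (m k), s k β (x (Fin.last k)) c * leftSketch s k c (takePre x)

/-- The right-sketched unfolding `Φ̄_k = p ∘ T_{k+1}`. -/
noncomputable def rightSketched {n : ℕ → ℕ} {d : ℕ} (p : PreIdx n d → ℝ)
    {ℓ : ℕ → ℕ} (T : ∀ k : ℕ, SufIdx n d k → Fin (ℓ k) → ℝ) (k : ℕ)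
    (x : PreIdx n k) (γ : Fin (ℓ k)) : ℝ :=
  ∑ y : SufIdx n d k, p (glue x y) * T k y γ

/-- The doubly sketched tensor `Φ̃_{j+1} = S_j ∘ Φ̄_{j+1}`. -/
noncomputable def tildePhi {n : ℕ → ℕ} {d : ℕ} {ℓ m : ℕ → ℕ} (p : PreIdx n d → ℝ)
    (T : ∀ k : ℕ, SufIdx n d k → Fin (ℓ k) → ℝ)
    (s : ∀ k : ℕ, Fin (m (k + 1)) → Fin (n k) → Fin (m k) → ℝ)
    (j : ℕ) (β : Fin (m j)) (xj : Fin (n j)) (γ : Fin (ℓ (j + 1))) : ℝ :=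
  ∑ z : PreIdx n j, leftSketch s j β z * rightSketched p T (j + 1) (snoc' z xj) γ

/-- Marginal of `p` on the window of variables `[a, b)`. -/
noncomputable def winMarg {n : ℕ → ℕ} {d : ℕ} (p : PreIdx n d → ℝ) (a b : ℕ)
    (y : MidIdx n d a b) : ℝ :=
  ∑ z : ∀ i : {i : Fin d // (i : ℕ) < a ∨ b ≤ (i : ℕ)}, Fin (n i),
    p fun i =>
      if h : a ≤ (i : ℕ) ∧ (i : ℕ) < b then y ⟨i, h⟩ else z ⟨i, by omega⟩

/-- Marginal of `p` on the window `[a, b)`, viewed as a matrix with rows indexed by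
variables in `[a, c)` and columns by variables in `[c, b)`. -/
noncomputable def winMatrix {n : ℕ → ℕ} {d : ℕ} (p : PreIdx n d → ℝ) (a c b : ℕ) :
    Matrix (MidIdx n d a c) (MidIdx n d c b) ℝ :=
  Matrix.of fun x y =>
    ∑ z : ∀ i : {i : Fin d // (i : ℕ) < a ∨ b ≤ (i : ℕ)}, Fin (n i),
      p fun i =>
        if h1 : a ≤ (i : ℕ) ∧ (i : ℕ) < c then x ⟨i, h1⟩
        else if h2 : c ≤ (i : ℕ) ∧ (i : ℕ) < b then y ⟨i, h2⟩
        else z ⟨i, by omega⟩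

/-- A (first-order) discrete Markov model: a probability density such that for all
`2 ≤ k ≤ d - 1` (1-based), `p(x) · p_k(x_k) = p_{1:k}(x_{1:k}) · p_{k:d}(x_{k:d})`. -/
def IsMarkov {n : ℕ → ℕ} {d : ℕ} (p : PreIdx n d → ℝ) : Prop :=
  (∀ x, 0 ≤ p x) ∧ (∑ x : PreIdx n d, p x) = 1 ∧
    ∀ k : ℕ, 2 ≤ k → k ≤ d - 1 → ∀ x : PreIdx n d,
      p x * winMarg p (k - 1) k (fun i => x i.1) =
        winMarg p 0 k (fun i => x i.1) * winMarg p (k - 1) d (fun i => x i.1)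

/-- An order-`m` discrete Markov model. -/
def IsMarkovOrder {n : ℕ → ℕ} {d : ℕ} (m : ℕ) (p : PreIdx n d → ℝ) : Prop :=
  (∀ x, 0 ≤ p x) ∧ (∑ x : PreIdx n d, p x) = 1 ∧
    ∀ k : ℕ, m + 1 ≤ k → k ≤ d - 1 → ∀ x : PreIdx n d,
      p x * winMarg p (k - m) k (fun i => x i.1) =
        winMarg p 0 k (fun i => x i.1) * winMarg p (k - m) d (fun i => x i.1)

/-- Spectral norm (ℓ² → ℓ² operator norm) of a matrix. -/
noncomputable def specNorm {R C : Type*} [Fintype R] [Fintype C] [DecidableEq C]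
    (M : Matrix R C ℝ) : ℝ :=
  ‖LinearMap.toContinuousLinearMap (Matrix.toEuclideanLin M)‖

/-- Moore–Penrose pseudoinverse of a full-column-rank matrix, `A⁺ = (AᵀA)⁻¹Aᵀ`. -/
noncomputable def pinv {m n : ℕ} (A : Matrix (Fin m) (Fin n) ℝ) :
    Matrix (Fin n) (Fin m) ℝ :=
  (Aᵀ * A)⁻¹ * Aᵀ

/-- The norm `|||G|||`: max over the middle index of the spectral norm of the slices. -/
noncomputable def tnorm {a b c : ℕ} (G : Fin a → Fin b → Fin c → ℝ) : ℝ :=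
  ⨆ i : Fin b, specNorm (Matrix.of fun x y => G x i y)

/-- Supremum norm of a 3-tensor. -/
noncomputable def supNorm3 {a b c : ℕ} (G : Fin a → Fin b → Fin c → ℝ) : ℝ :=
  ⨆ q : Fin a × Fin b × Fin c, |G q.1 q.2.1 q.2.2|

/-- Supremum norm of a `d`-dimensional tensor. -/
noncomputable def supNormF {n : ℕ → ℕ} {d : ℕ} (f : PreIdx n d → ℝ) : ℝ :=
  ⨆ x : PreIdx n d, |f x|

/-- The Core Determining Equations (CDEs) formed by `Φ_1, …, Φ_{d-1}` (here `d = d₀ + 2`). -/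
def CDE (d₀ : ℕ) (n r : ℕ → ℕ) (p : PreIdx n (d₀ + 2) → ℝ)
    (Φ : ∀ k : ℕ, PreIdx n k → Fin (r k) → ℝ) (G : CoreType n r (d₀ + 2)) : Prop :=
  (∀ (a : Fin (r 0)) (x : PreIdx n 1) (α : Fin (r 1)),
      G ⟨0, by omega⟩ a (x ⟨0, Nat.one_pos⟩) α = Φ 1 x α) ∧
  (∀ j : ℕ, ∀ _hj1 : 1 ≤ j, ∀ _hj2 : j ≤ d₀, ∀ (x : PreIdx n (j + 1)) (b : Fin (r (j + 1))),
      (∑ c : Fin (r j), Φ j (takePre x) c * G ⟨j, by omega⟩ c (x (Fin.last j)) b) =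
        Φ (j + 1) x b) ∧
  (∀ (x : PreIdx n (d₀ + 2)) (b : Fin (r (d₀ + 2))),
      (∑ c : Fin (r (d₀ + 1)), Φ (d₀ + 1) (takePre x) c *
          G ⟨d₀ + 1, by omega⟩ c (x (Fin.last (d₀ + 1))) b) = p x)

/-!
The columns of `Φ_k` are `r_k` vectors spanning the column space of the `k`-th unfolding,
which has dimension `r_k`; so they are linearly independent and each CDE has at most one
solution. Fixing the last variable in a column of the `(k+1)`-th unfolding gives a column of
the `k`-th unfolding, so every right-hand side `Φ_{k+1}(·, x_{k+1}, α_{k+1})` (resp. `p(·, x_d)`)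
lies in the column space of `Φ_k`, and a solution exists. Chaining the equations from
`G_1 = Φ_1` to `Φ_{d-1} G_d = p` gives the tensor train formula.
-/

section Indices

variable {n : ℕ → ℕ} {d k : ℕ}

@[simp]
lemma snoc'_last (z : PreIdx n k) (t : Fin (n k)) : snoc' z t (Fin.last k) = t := by
  simp [snoc']

@[simp]
lemma takePre_snoc' (z : PreIdx n k) (t : Fin (n k)) : takePre (snoc' z t) = z := by
  funext i
  simp [takePre, snoc', i.isLt]

@[simp]
lemma snoc'_takePre (x : PreIdx n (k + 1)) : snoc' (takePre x) (x (Fin.last k)) = x := by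
  funext i
  by_cases h : (i : ℕ) < k
  · simp [snoc', takePre, h]
  · obtain rfl : i = Fin.last k := Fin.ext (by have := i.isLt; simp only [Fin.val_last]; omega)
    exact snoc'_last _ _

def sufCons (t : Fin (n k)) (y : SufIdx n d (k + 1)) : SufIdx n d k :=
  fun i => if h : (i.1 : ℕ) = k then Fin.cast (congrArg n h.symm) t
    else y ⟨i.1, by have := i.2; omega⟩

lemma glue_snoc' (z : PreIdx n k) (t : Fin (n k)) (y : SufIdx n d (k + 1)) :
    glue (snoc' z t) y = glue z (sufCons t y) := by
  funext i
  by_cases h1 : (i : ℕ) < k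
  · simp [glue, snoc', h1, Nat.lt_succ_of_lt h1]
  · by_cases h2 : (i : ℕ) = k
    · simp [glue, snoc', sufCons, h2]
    · have h3 : ¬ (i : ℕ) < k + 1 := by omega
      simp [glue, sufCons, h1, h2, h3]

end Indices

section ColumnSpace

variable {R C : Type*} [Fintype C]

lemma colSpace_eq_range_mulVecLin (M : Matrix R C ℝ) :
    colSpace M = LinearMap.range M.mulVecLin :=
  (range_mulVecLin M).symm

lemma mulVec_injective_of_mrank_eq_card {M : Matrix R C ℝ} (h : mrank M = Fintype.card C) :
    Function.Injective M.mulVec := by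
  rw [mulVec_injective_iff, linearIndependent_iff_card_eq_finrank_span, ← h]
  rfl

end ColumnSpace

section Unfolding

variable {n : ℕ → ℕ} {d : ℕ}

lemma comp_snoc'_mem_colSpace_unfold (p : PreIdx n d → ℝ) {k : ℕ} (t : Fin (n k))
    {v : PreIdx n (k + 1) → ℝ} (hv : v ∈ colSpace (unfold p (k + 1))) :
    (fun z => v (snoc' z t)) ∈ colSpace (unfold p k) := by
  have hmap : Submodule.map (LinearMap.funLeft ℝ ℝ fun z : PreIdx n k => snoc' z t)
      (colSpace (unfold p (k + 1))) ≤ colSpace (unfold p k) := by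
    rw [colSpace, Submodule.map_span, Submodule.span_le]
    rintro _ ⟨_, ⟨y, rfl⟩, rfl⟩
    exact Submodule.subset_span
      ⟨sufCons t y, funext fun z => (congrArg p (glue_snoc' z t y)).symm⟩
  exact hmap ⟨v, hv, rfl⟩

lemma mem_colSpace_unfold_self (p : PreIdx n d → ℝ) : p ∈ colSpace (unfold p d) :=
  Submodule.subset_span ⟨fun i => absurd i.2 (Nat.not_le.mpr i.1.isLt),
    funext fun _ => congrArg p (funext fun i => dif_pos i.isLt)⟩

end Unfolding

section CoreChain

variable {n r : ℕ → ℕ} {D : ℕ}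

def IsCoreChain (Ψ : ∀ k : ℕ, PreIdx n k → Fin (r k) → ℝ) (G : CoreType n r D) : Prop :=
  ∀ (k : Fin D) (x : PreIdx n (k + 1)) (b : Fin (r (k + 1))),
    ∑ c, Ψ k (takePre x) c * G k c (x (Fin.last k)) b = Ψ (k + 1) x b

variable {Ψ : ∀ k : ℕ, PreIdx n k → Fin (r k) → ℝ}

lemma isCoreChain_iff_mulVec {G : CoreType n r D} :
    IsCoreChain Ψ G ↔ ∀ (k : Fin D) (t : Fin (n k)) (b : Fin (r (k + 1))),
      of (Ψ k) *ᵥ (fun c => G k c t b) = fun z => Ψ (k + 1) (snoc' z t) b := by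
  constructor
  · intro h k t b
    funext z
    simpa [mulVec, dotProduct] using h k (snoc' z t) b
  · intro h k x b
    simpa [mulVec, dotProduct] using congrFun (h k (x (Fin.last k)) b) (takePre x)

theorem existsUnique_isCoreChain (hinj : ∀ k < D, Function.Injective (of (Ψ k)).mulVec)
    (hmem : ∀ k < D, ∀ (t : Fin (n k)) (b : Fin (r (k + 1))),
      (fun z => Ψ (k + 1) (snoc' z t) b) ∈ colSpace (of (Ψ k))) :
    ∃! G : CoreType n r D, IsCoreChain Ψ G := by
  simp only [isCoreChain_iff_mulVec]
  have hsolv (k : Fin D) (t : Fin (n k)) (b : Fin (r (k + 1))) :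
      ∃ g, of (Ψ k) *ᵥ g = fun z => Ψ (k + 1) (snoc' z t) b := by
    simpa [colSpace_eq_range_mulVecLin] using hmem k k.2 t b
  choose g hg using hsolv
  refine ⟨fun k c t b => g k t b c, fun k t b => hg k t b, fun G hG => ?_⟩
  funext k c t b
  exact congrFun (hinj k k.2 ((hG k t b).trans (hg k t b).symm)) c

lemma ttPrefixF_eq_of_isCoreChain (hr0 : r 0 = 1) (hΨ0 : ∀ x b, Ψ 0 x b = 1)
    {G : CoreType n r D} (hG : IsCoreChain Ψ G) :
    ∀ k (hk : k ≤ D) x a b, ttPrefixF G k hk x a b = Ψ k x b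
  | 0, _, _, a, b => by
    rw [ttPrefixF, hΨ0, if_pos (by omega)]
  | k + 1, hk, x, a, b => by
    rw [ttPrefixF]
    simp only [ttPrefixF_eq_of_isCoreChain hr0 hΨ0 hG k]
    exact hG ⟨k, hk⟩ x b

lemma ttContract_eq_sum_of_isCoreChain (hr0 : r 0 = 1) (hΨ0 : ∀ x b, Ψ 0 x b = 1)
    {G : CoreType n r D} (hG : IsCoreChain Ψ G) (x : PreIdx n D) :
    ttContract G x = ∑ b, Ψ D x b := by
  have : Subsingleton (Fin (r 0)) := by rw [hr0]; infer_instance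
  rw [ttContract, Fintype.sum_subsingleton _ ⟨0, by omega⟩]
  simp only [ttPrefixF_eq_of_isCoreChain hr0 hΨ0 hG]

end CoreChain

section CDE

variable {d₀ : ℕ} {n r : ℕ → ℕ} {p : PreIdx n (d₀ + 2) → ℝ}
  {Φ : ∀ k : ℕ, PreIdx n k → Fin (r k) → ℝ}

/-- The boundary conventions `Φ_0 = 1` and `Φ_d = p`, under which all the CDEs take the common
form `Φ_k G_{k+1} = Φ_{k+1}`. -/
def extendBoundary (d₀ : ℕ) (p : PreIdx n (d₀ + 2) → ℝ)
    (Φ : ∀ k : ℕ, PreIdx n k → Fin (r k) → ℝ) : ∀ k : ℕ, PreIdx n k → Fin (r k) → ℝ :=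
  fun k x b => if k = 0 then 1 else if h : k = d₀ + 2 then p fun i => x (Fin.cast h.symm i)
    else Φ k x b

@[simp]
lemma extendBoundary_zero : extendBoundary d₀ p Φ 0 = fun _ _ => 1 :=
  rfl

@[simp]
lemma extendBoundary_last (x : PreIdx n (d₀ + 2)) (b : Fin (r (d₀ + 2))) :
    extendBoundary d₀ p Φ (d₀ + 2) x b = p x := by
  simp [extendBoundary]

lemma extendBoundary_of_pos_of_le {k : ℕ} (h1 : 1 ≤ k) (h2 : k ≤ d₀ + 1) :
    extendBoundary d₀ p Φ k = Φ k := by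
  funext x b
  simp [extendBoundary, show k ≠ 0 by omega, show k ≠ d₀ + 2 by omega]

lemma cde_iff_isCoreChain (hr0 : r 0 = 1) {G : CoreType n r (d₀ + 2)} :
    CDE d₀ n r p Φ G ↔ IsCoreChain (extendBoundary d₀ p Φ) G := by
  have : Subsingleton (Fin (r 0)) := by rw [hr0]; infer_instance
  have first (x : PreIdx n 1) (b : Fin (r 1)) (a : Fin (r 0)) :
      ∑ c, extendBoundary d₀ p Φ 0 (takePre x) c * G ⟨0, by omega⟩ c (x (Fin.last 0)) b =
        G ⟨0, by omega⟩ a (x ⟨0, Nat.one_pos⟩) b := by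
    simp [Fintype.sum_subsingleton _ a]
  constructor
  · rintro ⟨h1, h2, h3⟩ ⟨k, hk⟩ x b
    rcases Nat.eq_zero_or_pos k with rfl | hpos
    · rw [first x b ⟨0, by omega⟩, h1, extendBoundary_of_pos_of_le le_rfl (by omega)]
    rcases Nat.lt_or_ge k (d₀ + 1) with hlt | hge
    · rw [extendBoundary_of_pos_of_le hpos (by omega),
        extendBoundary_of_pos_of_le (by omega) hlt]
      exact h2 k hpos (by omega) x b
    · obtain rfl : k = d₀ + 1 := by omega
      rw [extendBoundary_of_pos_of_le hpos le_rfl, extendBoundary_last]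
      exact h3 x b
  · intro h
    refine ⟨fun a x b => ?_, fun j hj1 hj2 x b => ?_, fun x b => ?_⟩
    · rw [← first x b a, h ⟨0, by omega⟩ x b, extendBoundary_of_pos_of_le le_rfl (by omega)]
    · have := h ⟨j, by omega⟩ x b
      rwa [extendBoundary_of_pos_of_le (k := j) hj1 (by omega),
        extendBoundary_of_pos_of_le (k := j + 1) (by omega) (by omega)] at this
    · have := h ⟨d₀ + 1, by omega⟩ x b
      rwa [extendBoundary_of_pos_of_le (by omega) le_rfl, extendBoundary_last] at this

lemma mulVec_of_extendBoundary_injective (hr0 : r 0 = 1)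
    (hrank : ∀ k, 1 ≤ k → k ≤ d₀ + 1 → mrank (unfold p k) = r k)
    (hΦ : ∀ k, 1 ≤ k → k ≤ d₀ + 1 → colSpace (of (Φ k)) = colSpace (unfold p k))
    {k : ℕ} (hk : k < d₀ + 2) : Function.Injective (of (extendBoundary d₀ p Φ k)).mulVec := by
  rcases Nat.eq_zero_or_pos k with rfl | hpos
  · have : Subsingleton (Fin (r 0)) := by rw [hr0]; infer_instance
    intro v w hvw
    funext c
    simpa [mulVec, dotProduct, Fintype.sum_subsingleton _ c] using
      congrFun hvw fun i => i.elim0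
  · rw [extendBoundary_of_pos_of_le hpos (by omega)]
    refine mulVec_injective_of_mrank_eq_card ?_
    rw [Fintype.card_fin, mrank, hΦ k hpos (by omega)]
    exact hrank k hpos (by omega)

lemma extendBoundary_succ_mem_colSpace (hr0 : r 0 = 1)
    (hΦ : ∀ k, 1 ≤ k → k ≤ d₀ + 1 → colSpace (of (Φ k)) = colSpace (unfold p k))
    {k : ℕ} (hk : k < d₀ + 2) (t : Fin (n k)) (b : Fin (r (k + 1))) :
    (fun z => extendBoundary d₀ p Φ (k + 1) (snoc' z t) b) ∈
      colSpace (of (extendBoundary d₀ p Φ k)) := by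
  rcases Nat.eq_zero_or_pos k with rfl | hpos
  · -- every function on the one-point type `PreIdx n 0` is a multiple of the constant column
    set v := fun z => extendBoundary d₀ p Φ 1 (snoc' z t) b
    have hv : v = v (fun i => i.elim0) • fun _ => 1 := by
      funext z
      simp [Subsingleton.elim z fun i => i.elim0]
    rw [hv]
    exact Submodule.smul_mem _ _ (Submodule.subset_span ⟨⟨0, by omega⟩, rfl⟩)
  · rw [extendBoundary_of_pos_of_le hpos (by omega), hΦ k hpos (by omega)]
    refine comp_snoc'_mem_colSpace_unfold p t
      (v := fun x => extendBoundary d₀ p Φ (k + 1) x b) ?_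
    rcases Nat.lt_or_ge k (d₀ + 1) with hlt | hge
    · rw [extendBoundary_of_pos_of_le (by omega) hlt, ← hΦ (k + 1) (by omega) hlt]
      exact Submodule.subset_span ⟨b, rfl⟩
    · obtain rfl : k = d₀ + 1 := by omega
      simpa using mem_colSpace_unfold_self p

end CDE

/-- Proposition: Core Determining Equations.
If for each `k = 1, …, d-1` the `k`-th unfolding matrix of `p` has rank `r_k` and
`Φ_k` has the same column space as the `k`-th unfolding matrix, then each of the
Core Determining Equations has a unique solution, and the solutions `G_1, …, G_d`
form a tensor-train representation of `p` of rank `(r_1, …, r_{d-1})`.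
(Here `d = d₀ + 2 ≥ 2`, indices are 0-based, and the first/last cores carry a dummy
index of size `r 0 = 1` resp. `r d = 1`.) -/
theorem cde_unique_solution_and_tt_representation
    (d₀ : ℕ) (n r : ℕ → ℕ) (hr0 : r 0 = 1) (hrd : r (d₀ + 2) = 1)
    (p : PreIdx n (d₀ + 2) → ℝ)
    (hrank : ∀ k, 1 ≤ k → k ≤ d₀ + 1 → mrank (unfold p k) = r k)
    (Φ : ∀ k : ℕ, PreIdx n k → Fin (r k) → ℝ)
    (hΦ : ∀ k, 1 ≤ k → k ≤ d₀ + 1 →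
        colSpace (Matrix.of (Φ k)) = colSpace (unfold p k)) :
    (∃! G : CoreType n r (d₀ + 2), CDE d₀ n r p Φ G) ∧
      ∀ G : CoreType n r (d₀ + 2), CDE d₀ n r p Φ G → ∀ x, p x = ttContract G x := by
  simp only [cde_iff_isCoreChain hr0]
  refine ⟨existsUnique_isCoreChain
    (fun _ hk => mulVec_of_extendBoundary_injective hr0 hrank hΦ hk)
    (fun _ hk => extendBoundary_succ_mem_colSpace hr0 hΦ hk), fun G hG x => ?_⟩
  rw [ttContract_eq_sum_of_isCoreChain hr0 (fun _ _ => rfl) hG]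
  simp [hrd]
end

section
/- Let p be a discrete Markov model on [n_1]×⋯×[n_d]. Then for any indices 1 ≤ i ≤ k < j ≤ d, the matrix p((x_i,…,x_k);(x_{k+1},…,x_j)) (the marginal of p on variables x_i,…,x_j, viewed as a matrix with rows indexed by (x_i,…,x_k) and columns by (x_{k+1},…,x_j)) and the matrix p((x_i,…,x_k);x_{k+1}) (the marginal of p on variables x_i,…,x_{k+1}, with rows indexed by (x_i,…,x_k) and columns by x_{k+1}) have the same column space. -/
open scoped BigOperators
open Matrix

/-!
Split a configuration at position `c` into its past `u = x_{<c}`, present `z = x_c` and future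
`v = x_{>c}`. The Markov property at `c` says `p(u,z,v) p(z) = p(u,z) p(z,v)`: past and future
are conditionally independent given the present. Marginalising over `x_{<a}` and `x_{≥b}`, the
column `(x_c, x_{c+1}, …, x_{b-1})` of the first matrix is therefore `p(x_c, …, x_{b-1}) / p(x_c)`
times the column `x_c` of the second one (both vanish when `p(x_c) = 0`, by nonnegativity), while
the column `x_c` of the second matrix is the sum of the columns `(x_c, ·)` of the first.
-/

theorem colSpace_le_iff {R C : Type*} (M : Matrix R C ℝ) (S : Submodule ℝ (R → ℝ)) :
    colSpace M ≤ S ↔ ∀ c, (fun r => M r c) ∈ S := by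
  rw [colSpace, Submodule.span_le, Set.range_subset_iff]
  rfl

theorem colSpace_submatrix_equiv {R C C' : Type*} (M : Matrix R C ℝ) (e : C' ≃ C) :
    colSpace (M.submatrix id e) = colSpace M := by
  rw [colSpace, colSpace, ← e.surjective.range_comp]
  rfl

theorem mem_colSpace {R C : Type*} (M : Matrix R C ℝ) (c : C) : (fun r => M r c) ∈ colSpace M :=
  Submodule.subset_span ⟨c, rfl⟩

theorem colSpace_eq_of_sum_of_smul {X Z W : Type*} [Fintype W]
    (A : Matrix X (Z × W) ℝ) (B : Matrix X Z ℝ) (hsum : ∀ x z, B x z = ∑ w, A x (z, w))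
    (hsmul : ∀ z w, ∃ t : ℝ, ∀ x, A x (z, w) = t * B x z) :
    colSpace A = colSpace B := by
  apply le_antisymm
  · rw [colSpace_le_iff]
    rintro ⟨z, w⟩
    obtain ⟨t, ht⟩ := hsmul z w
    have : (fun x => A x (z, w)) = t • fun x => B x z := funext ht
    rw [this]
    exact Submodule.smul_mem _ _ (mem_colSpace B z)
  · rw [colSpace_le_iff]
    intro z
    have : (fun x => B x z) = ∑ w, fun x => A x (z, w) := by
      funext x
      simp [hsum]
    rw [this]
    exact Submodule.sum_mem _ fun w _ => mem_colSpace A (z, w)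

section CondIndep

variable {U Z V X W : Type*} [Fintype U] [Fintype V] [Fintype W] [DecidableEq X] [DecidableEq W]

def IsCondIndep (q : U → Z → V → ℝ) : Prop :=
  ∀ u z v, q u z v * ∑ u', ∑ v', q u' z v' = (∑ v', q u z v') * ∑ u', q u' z v

theorem colSpace_marginal_eq_of_isCondIndep {q : U → Z → V → ℝ} (hq : IsCondIndep q)
    (hq0 : ∀ u z v, 0 ≤ q u z v) (ρ : U → X) (σ : V → W) :
    colSpace (Matrix.of fun x (zw : Z × W) => ∑ u with ρ u = x, ∑ v with σ v = zw.2, q u zw.1 v) =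
      colSpace (Matrix.of fun x z => ∑ u with ρ u = x, ∑ v, q u z v) := by
  refine colSpace_eq_of_sum_of_smul _ _ (fun x z => ?_) (fun z w => ?_)
  · simp only [Matrix.of_apply]
    rw [Finset.sum_comm (s := Finset.univ)]
    exact (Finset.sum_congr rfl fun u _ => Finset.sum_fiberwise _ σ _).symm
  · by_cases hz : ∑ u', ∑ v', q u' z v' = 0
    · have hq_zero : ∀ u v, q u z v = 0 := fun u v =>
        (Finset.sum_eq_zero_iff_of_nonneg fun v _ => hq0 u z v).1
          ((Finset.sum_eq_zero_iff_of_nonneg fun u _ =>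
            Finset.sum_nonneg fun v _ => hq0 u z v).1 hz u (Finset.mem_univ u))
          v (Finset.mem_univ v)
      exact ⟨0, fun x => by simp [hq_zero]⟩
    · refine ⟨(∑ v with σ v = w, ∑ u', q u' z v) / ∑ u', ∑ v', q u' z v', fun x => ?_⟩
      have key : (∑ u with ρ u = x, ∑ v with σ v = w, q u z v) * ∑ u', ∑ v', q u' z v' =
          (∑ u with ρ u = x, ∑ v', q u z v') * ∑ v with σ v = w, ∑ u', q u' z v := by
        rw [Finset.sum_mul, Finset.sum_mul_sum]
        refine Finset.sum_congr rfl fun u _ => ?_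
        rw [Finset.sum_mul]
        exact Finset.sum_congr rfl fun v _ => hq u z v
      rw [Matrix.of_apply, Matrix.of_apply, div_mul_eq_mul_div, eq_div_iff hz, key, mul_comm]

end CondIndep

section Window

variable {n : ℕ → ℕ} {d : ℕ}

def window (ω : PreIdx n d) (lo hi : ℕ) : MidIdx n d lo hi := fun i => ω i.1

def windowSplitEquiv {lo mid hi : ℕ} (h₁ : lo ≤ mid) (h₂ : mid ≤ hi) :
    MidIdx n d lo hi ≃ MidIdx n d lo mid × MidIdx n d mid hi where
  toFun y := (fun i => y ⟨i.1, i.2.1, i.2.2.trans_le h₂⟩, fun i => y ⟨i.1, h₁.trans i.2.1, i.2.2⟩)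
  invFun y i := if h : (i : ℕ) < mid then y.1 ⟨i.1, i.2.1, h⟩ else y.2 ⟨i.1, not_lt.1 h, i.2.2⟩
  left_inv y := by
    funext i
    dsimp only
    split_ifs <;> rfl
  right_inv y :=
    Prod.ext (funext fun i => dif_pos i.2.2) (funext fun i => dif_neg (not_lt.2 i.2.1))

@[simp]
theorem windowSplitEquiv_window {lo mid hi : ℕ} (h₁ : lo ≤ mid) (h₂ : mid ≤ hi) (ω : PreIdx n d) :
    windowSplitEquiv h₁ h₂ (window ω lo hi) = (window ω lo mid, window ω mid hi) :=
  rfl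

theorem window_eq_iff {lo mid hi : ℕ} (h₁ : lo ≤ mid) (h₂ : mid ≤ hi) (ω : PreIdx n d)
    (y : MidIdx n d lo hi) :
    window ω lo hi = y ↔ window ω lo mid = (windowSplitEquiv h₁ h₂ y).1 ∧
      window ω mid hi = (windowSplitEquiv h₁ h₂ y).2 := by
  rw [← (windowSplitEquiv h₁ h₂).apply_eq_iff_eq, Prod.ext_iff, windowSplitEquiv_window]

def splitAtEquiv (c : ℕ) (hc : c + 1 ≤ d) :
    PreIdx n d ≃ MidIdx n d 0 c × MidIdx n d c (c + 1) × MidIdx n d (c + 1) d :=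
  ({ toFun := fun ω => window ω 0 d, invFun := fun y i => y ⟨i, Nat.zero_le _, i.2⟩,
      left_inv := fun _ => rfl, right_inv := fun _ => rfl } : PreIdx n d ≃ MidIdx n d 0 d).trans <|
    (windowSplitEquiv (Nat.zero_le c) (by omega)).trans <|
      Equiv.prodCongr (Equiv.refl _) (windowSplitEquiv c.le_succ hc)

theorem splitAtEquiv_apply (c : ℕ) (hc : c + 1 ≤ d) (ω : PreIdx n d) :
    splitAtEquiv c hc ω = (window ω 0 c, window ω c (c + 1), window ω (c + 1) d) :=
  rfl

theorem winMarg_eq_sum_filter (p : PreIdx n d → ℝ) (lo hi : ℕ) (y : MidIdx n d lo hi) :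
    winMarg p lo hi y = ∑ ω with window ω lo hi = y, p ω := by
  refine Finset.sum_nbij'
    (fun z i => if h : lo ≤ (i : ℕ) ∧ (i : ℕ) < hi then y ⟨i, h⟩ else z ⟨i, by omega⟩)
    (fun ω i => ω i.1) ?_ (by simp) ?_ ?_ (fun _ _ => rfl)
  · intro z _
    simp only [Finset.mem_filter, Finset.mem_univ, true_and]
    funext i
    exact dif_pos i.2
  · intro z _
    funext i
    exact dif_neg (by omega)
  · intro ω hω
    rw [Finset.mem_filter] at hω
    funext i
    dsimp only
    split_ifs with h
    · exact (congrFun hω.2 ⟨i, h⟩).symm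
    · rfl

theorem winMatrix_eq_sum_filter (p : PreIdx n d → ℝ) {a c b : ℕ} (hac : a ≤ c) (hcb : c ≤ b)
    (x : MidIdx n d a c) (y : MidIdx n d c b) :
    winMatrix p a c b x y = ∑ ω with window ω a c = x ∧ window ω c b = y, p ω := by
  have : winMatrix p a c b x y = winMarg p a b ((windowSplitEquiv hac hcb).symm (x, y)) := by
    refine Finset.sum_congr rfl fun z _ => congrArg p (funext fun i => ?_)
    simp only [windowSplitEquiv, Equiv.coe_fn_symm_mk]
    split_ifs <;> first | rfl | omega
  simp_rw [this, winMarg_eq_sum_filter, window_eq_iff hac hcb, Equiv.apply_symm_apply]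

theorem sum_filter_prod_prod {U Z V : Type*} [Fintype U] [Fintype Z] [Fintype V] [DecidableEq Z]
    (P : U → Prop) [DecidablePred P] (z : Z) (Q : V → Prop) [DecidablePred Q]
    (f : U × Z × V → ℝ) :
    ∑ t with P t.1 ∧ t.2.1 = z ∧ Q t.2.2, f t = ∑ u with P u, ∑ v with Q v, f (u, z, v) := by
  simp only [Finset.sum_filter, Fintype.sum_prod_type, ite_and]
  simp [Finset.sum_ite_eq', ← Finset.sum_filter]

theorem sum_filter_windows_eq_sum_splitAt {c : ℕ} (hc : c + 1 ≤ d) (f : PreIdx n d → ℝ)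
    (P : MidIdx n d 0 c → Prop) [DecidablePred P] (z : MidIdx n d c (c + 1))
    (Q : MidIdx n d (c + 1) d → Prop) [DecidablePred Q] :
    ∑ ω with P (window ω 0 c) ∧ window ω c (c + 1) = z ∧ Q (window ω (c + 1) d), f ω =
      ∑ u with P u, ∑ v with Q v, f ((splitAtEquiv c hc).symm (u, z, v)) := by
  refine Eq.trans ?_ (sum_filter_prod_prod P z Q fun t => f ((splitAtEquiv c hc).symm t))
  exact Finset.sum_equiv (splitAtEquiv c hc) (by simp [splitAtEquiv_apply]) (by simp)

theorem isCondIndep_of_isMarkov {p : PreIdx n d → ℝ} (hp : IsMarkov p) {c : ℕ} (hc₀ : 1 ≤ c)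
    (hc : c + 1 < d) :
    IsCondIndep fun u z v => p ((splitAtEquiv c hc.le).symm (u, z, v)) := by
  intro u z v
  set ω := (splitAtEquiv c hc.le).symm (u, z, v)
  have hω : (window ω 0 c, window ω c (c + 1), window ω (c + 1) d) = (u, z, v) :=
    (splitAtEquiv c hc.le).apply_symm_apply (u, z, v)
  simp only [Prod.mk.injEq] at hω
  obtain ⟨hu, hz, hv⟩ := hω
  have hmarkov : p ω * winMarg p c (c + 1) (window ω c (c + 1)) =
      winMarg p 0 (c + 1) (window ω 0 (c + 1)) * winMarg p c d (window ω c d) :=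
    hp.2.2 (c + 1) (by omega) (by omega) ω
  have hmid : winMarg p c (c + 1) (window ω c (c + 1)) =
      ∑ u', ∑ v', p ((splitAtEquiv c hc.le).symm (u', z, v')) := by
    rw [winMarg_eq_sum_filter, hz]
    simpa using sum_filter_windows_eq_sum_splitAt hc.le p (fun _ => True) z (fun _ => True)
  have hpre : winMarg p 0 (c + 1) (window ω 0 (c + 1)) =
      ∑ v', p ((splitAtEquiv c hc.le).symm (u, z, v')) := by
    simp_rw [winMarg_eq_sum_filter, window_eq_iff (Nat.zero_le c) c.le_succ,
      windowSplitEquiv_window, hu, hz]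
    simpa [Finset.filter_eq'] using
      sum_filter_windows_eq_sum_splitAt hc.le p (· = u) z (fun _ => True)
  have hsuf : winMarg p c d (window ω c d) =
      ∑ u', p ((splitAtEquiv c hc.le).symm (u', z, v)) := by
    simp_rw [winMarg_eq_sum_filter, window_eq_iff c.le_succ hc.le, windowSplitEquiv_window, hz, hv]
    simpa [Finset.filter_eq'] using
      sum_filter_windows_eq_sum_splitAt hc.le p (fun _ => True) z (· = v)
  rwa [hmid, hpre, hsuf] at hmarkov

theorem winMatrix_eq_sum_splitAt (p : PreIdx n d → ℝ) {a c b : ℕ} (hac : a ≤ c) (hcb : c + 1 ≤ b)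
    (hbd : b ≤ d) (x : MidIdx n d a c) (z : MidIdx n d c (c + 1)) (w : MidIdx n d (c + 1) b) :
    winMatrix p a c b x ((windowSplitEquiv c.le_succ hcb).symm (z, w)) =
      ∑ u with (windowSplitEquiv (Nat.zero_le a) hac u).2 = x,
        ∑ v with (windowSplitEquiv hcb hbd v).1 = w,
          p ((splitAtEquiv c (hcb.trans hbd)).symm (u, z, v)) := by
  simp_rw [winMatrix_eq_sum_filter p hac (c.le_succ.trans hcb), window_eq_iff c.le_succ hcb,
    Equiv.apply_symm_apply]
  exact sum_filter_windows_eq_sum_splitAt _ p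
    (fun u => (windowSplitEquiv (Nat.zero_le a) hac u).2 = x) z
    (fun v => (windowSplitEquiv hcb hbd v).1 = w)

theorem winMatrix_succ_eq_sum_splitAt (p : PreIdx n d → ℝ) {a c : ℕ} (hac : a ≤ c)
    (hc : c + 1 ≤ d) (x : MidIdx n d a c) (z : MidIdx n d c (c + 1)) :
    winMatrix p a c (c + 1) x z =
      ∑ u with (windowSplitEquiv (Nat.zero_le a) hac u).2 = x,
        ∑ v, p ((splitAtEquiv c hc).symm (u, z, v)) := by
  rw [winMatrix_eq_sum_filter p hac c.le_succ]
  simpa using sum_filter_windows_eq_sum_splitAt hc p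
    (fun u => (windowSplitEquiv (Nat.zero_le a) hac u).2 = x) z (fun _ => True)

end Window

-- Windows are 0-based: rows `[a, c)`, columns `[c, b)`, i.e. `a = i - 1`, `c = k`, `b = j`.
/-- Lemma: column spaces for Markov models.
For a discrete Markov model `p` on `[n_1] × ⋯ × [n_d]` and any `1 ≤ i ≤ k < j ≤ d`
(1-based), the marginal matrix `p((x_i,…,x_k); (x_{k+1},…,x_j))` and the marginal
matrix `p((x_i,…,x_k); x_{k+1})` have the same column space.
(0-based encoding: rows are the variables in the window `[a, c)` with `a = i - 1`,
`c = k`, columns those in `[c, b)` with `b = j`; so `1 ≤ i ≤ k < j ≤ d` becomes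
`a < c < b ≤ d`.) -/
theorem markov_colSpace_eq
    (d : ℕ) (n : ℕ → ℕ) (p : PreIdx n d → ℝ) (hp : IsMarkov p)
    (a c b : ℕ) (hac : a < c) (hcb : c < b) (hbd : b ≤ d) :
    colSpace (winMatrix p a c b) = colSpace (winMatrix p a c (c + 1)) := by
  obtain rfl | hcb' := (Nat.succ_le_of_lt hcb).eq_or_lt
  · rfl
  have hc : c + 1 < d := hcb'.trans_le hbd
  rw [← colSpace_submatrix_equiv _ (windowSplitEquiv c.le_succ hcb'.le).symm]
  convert colSpace_marginal_eq_of_isCondIndep (isCondIndep_of_isMarkov hp (by omega) hc)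
      (fun _ _ _ => hp.1 _) (fun u => (windowSplitEquiv (Nat.zero_le a) hac.le u).2)
      (fun v => (windowSplitEquiv hcb'.le hbd v).1) using 2
  · ext x ⟨z, w⟩
    exact winMatrix_eq_sum_splitAt p hac.le hcb'.le hbd x z w
  · ext x z
    exact winMatrix_succ_eq_sum_splitAt p hac.le hc.le x z
end

section
/- Let p be a discrete Markov model on [n_1]×⋯×[n_d] and let 1 ≤ k ≤ d−1. Then the rank of the k-th unfolding matrix p((x_1,…,x_k);(x_{k+1},…,x_d)) equals the rank of the matrix p(x_k;x_{k+1}) (the marginal of p on the pair (x_k,x_{k+1}), viewed as an n_k × n_{k+1} matrix), and, when 2 ≤ k ≤ d−1, it also equals the rank of the matrix p((x_{k−1},x_k);x_{k+1}) (the marginal of p on (x_{k−1},x_k,x_{k+1}), viewed as a matrix with rows indexed by (x_{k−1},x_k) and columns by x_{k+1}). -/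
/-!
Every matrix in the statement is the joint law matrix `P(f = r, g = c)` of two statistics
`f, g` of the configuration. Coarsening a statistic multiplies this matrix by a 0/1 matrix, so it
cannot raise the rank. If moreover `f` and `g` are conditionally independent given the coarsening
`h ∘ f`, then the matrix of `(f, g)` is the conditional law of `f` given `h ∘ f` times the matrix
of `(h ∘ f, g)`, so the rank does not drop either. The Markov property says that the prefix
`x_{<c}` and the suffix `x_{≥c}` are conditionally independent both given `x_{c-1}` and given
`x_c`: coarsening first the suffix to `x_c` and then the prefix to `x_{c-1}` turns the unfolding
into the pair marginal without changing the rank. The triple marginal is a coarsening of the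
unfolding and has the pair marginal as a coarsening, so its rank is squeezed between the two.
-/

open scoped BigOperators
open Matrix

section JointLaw

variable {Ω R S C C' : Type*} [Fintype Ω] [DecidableEq R] [DecidableEq S] [DecidableEq C]
  [DecidableEq C'] (p : Ω → ℝ)

noncomputable def law (f : Ω → R) (r : R) : ℝ := ∑ ω with f ω = r, p ω

noncomputable def jointMatrix (f : Ω → R) (g : Ω → C) : Matrix R C ℝ :=
  Matrix.of fun r c => law p (fun ω => (f ω, g ω)) (r, c)

def fiberMatrix (h : R → S) : Matrix R S ℝ := Matrix.of fun r s => if h r = s then 1 else 0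

noncomputable def condMatrix (f : Ω → R) (h : R → S) : Matrix R S ℝ :=
  Matrix.of fun r s => if h r = s then law p f r / law p (h ∘ f) s else 0

-- `f` and `g` are conditionally independent given the coarsening `h ∘ f` of `f`.
def CondIndep (f : Ω → R) (h : R → S) (g : Ω → C) : Prop :=
  ∀ r c, jointMatrix p f g r c * law p (h ∘ f) (h r) = law p f r * jointMatrix p (h ∘ f) g (h r) c

variable {p}

lemma jointMatrix_transpose (f : Ω → R) (g : Ω → C) :
    (jointMatrix p f g)ᵀ = jointMatrix p g f := by
  ext c r
  simp only [Matrix.transpose_apply, jointMatrix, Matrix.of_apply, law, Prod.mk.injEq, and_comm]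

lemma jointMatrix_comp_right [Fintype C] (f : Ω → R) (g : Ω → C) (k : C → C') :
    jointMatrix p f (k ∘ g) = jointMatrix p f g * fiberMatrix k := by
  ext r c'
  simp only [jointMatrix, fiberMatrix, law, Matrix.mul_apply, Matrix.of_apply, Prod.mk.injEq,
    Function.comp_apply, mul_ite, mul_one, mul_zero, ← Finset.sum_filter, ← Finset.filter_filter]
  rw [Finset.sum_fiberwise_eq_sum_filter]
  simp only [Finset.mem_filter, Finset.mem_univ, true_and, Finset.filter_filter]

lemma jointMatrix_comp_left [Fintype R] (f : Ω → R) (g : Ω → C) (h : R → S) :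
    jointMatrix p (h ∘ f) g = (fiberMatrix h)ᵀ * jointMatrix p f g := by
  rw [← Matrix.transpose_transpose (jointMatrix p (h ∘ f) g), jointMatrix_transpose,
    jointMatrix_comp_right, Matrix.transpose_mul, jointMatrix_transpose]

lemma jointMatrix_le_law_comp (hp : ∀ ω, 0 ≤ p ω) (f : Ω → R) (g : Ω → C) (h : R → S)
    (r : R) (c : C) : jointMatrix p f g r c ≤ law p (h ∘ f) (h r) :=
  Finset.sum_le_sum_of_subset_of_nonneg
    (Finset.monotone_filter_right _ fun ω hω => by simp_all)
    fun ω _ _ => hp ω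

lemma jointMatrix_eq_condMatrix_mul [Fintype S] (hp : ∀ ω, 0 ≤ p ω) {f : Ω → R} {h : R → S}
    {g : Ω → C} (hci : CondIndep p f h g) :
    jointMatrix p f g = condMatrix p f h * jointMatrix p (h ∘ f) g := by
  ext r c
  simp only [Matrix.mul_apply, condMatrix, Matrix.of_apply, ite_mul, zero_mul,
    Finset.sum_ite_eq, Finset.mem_univ, if_true]
  by_cases h0 : law p (h ∘ f) (h r) = 0
  -- a null value of `h ∘ f` kills the whole row, so the junk value `x / 0 = 0` is harmless
  · rw [h0, div_zero, zero_mul]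
    exact le_antisymm (h0 ▸ jointMatrix_le_law_comp hp f g h r c) <|
      Finset.sum_nonneg fun ω _ => hp ω
  · rw [div_mul_eq_mul_div, eq_div_iff h0]
    exact hci r c

theorem rank_jointMatrix_comp_left_le [Fintype R] [Fintype C] (f : Ω → R) (g : Ω → C) (h : R → S) :
    (jointMatrix p (h ∘ f) g).rank ≤ (jointMatrix p f g).rank := by
  rw [jointMatrix_comp_left]
  exact Matrix.rank_mul_le_right _ _

theorem rank_jointMatrix_comp_left_of_condIndep [Fintype R] [Fintype S] [Fintype C] [Fintype C']
    (hp : ∀ ω, 0 ≤ p ω) {f : Ω → R} {h : R → S} {g : Ω → C} (hci : CondIndep p f h g)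
    (k : C → C') : (jointMatrix p (h ∘ f) (k ∘ g)).rank = (jointMatrix p f (k ∘ g)).rank := by
  refine le_antisymm (rank_jointMatrix_comp_left_le f _ h) ?_
  rw [jointMatrix_comp_right, jointMatrix_eq_condMatrix_mul hp hci, Matrix.mul_assoc,
    ← jointMatrix_comp_right]
  exact Matrix.rank_mul_le_right _ _

theorem rank_jointMatrix_comp_right_le [Fintype R] [Fintype C] [Fintype C'] (f : Ω → R) (g : Ω → C)
    (k : C → C') : (jointMatrix p f (k ∘ g)).rank ≤ (jointMatrix p f g).rank := by
  rw [jointMatrix_comp_right]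
  exact Matrix.rank_mul_le_left _ _

theorem rank_jointMatrix_comp_right_of_condIndep [Fintype R] [Fintype C] [Fintype C']
    (hp : ∀ ω, 0 ≤ p ω) {f : Ω → R} {g : Ω → C} {k : C → C'} (hci : CondIndep p g k f) :
    (jointMatrix p f (k ∘ g)).rank = (jointMatrix p f g).rank := by
  rw [← Matrix.rank_transpose, jointMatrix_transpose, ← Matrix.rank_transpose (jointMatrix p f g),
    jointMatrix_transpose]
  exact rank_jointMatrix_comp_left_of_condIndep hp hci id

end JointLaw

lemma mrank_eq_rank {R C : Type*} [Fintype R] [Fintype C] (M : Matrix R C ℝ) :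
    mrank M = M.rank := by
  rw [mrank, Matrix.rank, Matrix.range_mulVecLin]
  rfl

def Subtype.restrict₂ {α : Type*} {β : α → Type*} {p q : α → Prop} (hpq : ∀ a, p a → q a)
    (f : ∀ x : Subtype q, β x.1) (x : Subtype p) : β x.1 :=
  f ⟨x.1, hpq _ x.2⟩

lemma Subtype.restrict₂_comp_restrict {α : Type*} {β : α → Type*} {p q : α → Prop}
    (hpq : ∀ a, p a → q a) :
    Subtype.restrict₂ (β := β) hpq ∘ Subtype.restrict q = Subtype.restrict p :=
  rfl

section Configurations

variable {n : ℕ → ℕ} {d : ℕ}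

def ReadsExactly {R : Type*} (f : PreIdx n d → R) (S : Fin d → Prop) : Prop :=
  ∀ ω ω', f ω' = f ω ↔ ∀ i, S i → ω' i = ω i

noncomputable def marg (p : PreIdx n d → ℝ) (S : Fin d → Prop) [DecidablePred S]
    (ω : PreIdx n d) : ℝ :=
  law p (Subtype.restrict S) (Subtype.restrict S ω)

def restrictPrefix {c : ℕ} (S : Fin d → Prop) (hS : ∀ i, S i → (i : ℕ) < c) (x : PreIdx n c) :
    ∀ i : Subtype S, Fin (n i) :=
  fun i => x ⟨i.1, hS _ i.2⟩

lemma restrictPrefix_comp_take {c : ℕ} (hcd : c ≤ d) (S : Fin d → Prop)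
    (hS : ∀ i, S i → (i : ℕ) < c) :
    restrictPrefix S hS ∘ (Fin.take c hcd : PreIdx n d → PreIdx n c) = Subtype.restrict S :=
  rfl

lemma readsExactly_restrict (S : Fin d → Prop) :
    ReadsExactly (Subtype.restrict S : PreIdx n d → _) S := by
  intro ω ω'
  simp only [funext_iff, Subtype.forall, Subtype.restrict]

lemma readsExactly_take {c : ℕ} (hc : c ≤ d) :
    ReadsExactly (Fin.take c hc : PreIdx n d → PreIdx n c) fun i => (i : ℕ) < c := by
  intro ω ω'
  simp only [funext_iff, Fin.take, Fin.forall_iff]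
  exact ⟨fun h i _ hic => h i hic, fun h i hic => h i (by omega) hic⟩

lemma ReadsExactly.prod {R C : Type*} {f : PreIdx n d → R} {g : PreIdx n d → C}
    {S T U : Fin d → Prop} (hf : ReadsExactly f S) (hg : ReadsExactly g T)
    (hU : ∀ i, U i ↔ S i ∨ T i) : ReadsExactly (fun ω => (f ω, g ω)) U := by
  intro ω ω'
  simp only [Prod.mk.injEq, hf ω ω', hg ω ω', hU, or_imp, forall_and]

lemma take_glue {c : ℕ} (hc : c ≤ d) (x : PreIdx n c) (y : SufIdx n d c) :
    Fin.take c hc (glue x y) = x := by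
  funext i
  simp [Fin.take, glue]

lemma restrict_glue {c : ℕ} (x : PreIdx n c) (y : SufIdx n d c) :
    Subtype.restrict (fun i : Fin d => c ≤ (i : ℕ)) (glue x y) = y := by
  funext i
  simp [Subtype.restrict, glue, Nat.not_lt.mpr i.2]

lemma exists_take_eq_and_restrict_eq {c : ℕ} (hcd : c ≤ d) (x : PreIdx n c) (y : SufIdx n d c) :
    ∃ ω : PreIdx n d,
      Fin.take c hcd ω = x ∧ Subtype.restrict (fun i : Fin d => c ≤ (i : ℕ)) ω = y :=
  ⟨glue x y, take_glue hcd x y, restrict_glue x y⟩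

variable {p : PreIdx n d → ℝ}

lemma ReadsExactly.law_eq_marg {R : Type*} [DecidableEq R] {f : PreIdx n d → R}
    {S : Fin d → Prop} [DecidablePred S] (hf : ReadsExactly f S) (ω : PreIdx n d) :
    law p f (f ω) = marg p S ω :=
  Finset.sum_congr (Finset.filter_congr fun ω' _ => by
    rw [hf, readsExactly_restrict S]) fun _ _ => rfl

lemma marg_congr {S T : Fin d → Prop} [DecidablePred S] [DecidablePred T] (h : ∀ i, S i ↔ T i)
    (ω : PreIdx n d) : marg p S ω = marg p T ω :=
  ReadsExactly.law_eq_marg (fun ω ω' => by simp only [readsExactly_restrict S ω ω', h]) ω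

lemma marg_eq_self {S : Fin d → Prop} [DecidablePred S] (h : ∀ i, S i) (ω : PreIdx n d) :
    marg p S ω = p ω := by
  rw [marg, law, Finset.sum_eq_single_of_mem ω (by simp)]
  intro ω' hω' hne
  simp only [Finset.mem_filter, Finset.mem_univ, true_and, readsExactly_restrict S ω ω'] at hω'
  exact absurd (funext fun i => hω' i (h i)) hne

lemma jointMatrix_apply_eq_self {R C : Type*} [DecidableEq R] [DecidableEq C]
    {f : PreIdx n d → R} {g : PreIdx n d → C} {S T : Fin d → Prop} (hf : ReadsExactly f S)
    (hg : ReadsExactly g T) (hST : ∀ i, S i ∨ T i) (ω : PreIdx n d) :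
    jointMatrix p f g (f ω) (g ω) = p ω :=
  ((hf.prod hg (U := fun _ => True) fun i => iff_of_true trivial (hST i)).law_eq_marg ω).trans
    (marg_eq_self (fun _ => trivial) ω)

lemma winMarg_eq_law (a b : ℕ) (y : MidIdx n d a b) :
    winMarg p a b y = law p (Subtype.restrict fun i : Fin d => a ≤ (i : ℕ) ∧ (i : ℕ) < b) y := by
  refine Finset.sum_nbij' (fun z i => if h : a ≤ (i : ℕ) ∧ (i : ℕ) < b then y ⟨i, h⟩
      else z ⟨i, by omega⟩) (fun ω => Subtype.restrict _ ω) ?_ (by simp) ?_ ?_ (fun _ _ => rfl)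
  · intro z _
    simp only [Finset.mem_filter, Finset.mem_univ, true_and]
    funext i
    simp [Subtype.restrict, i.2]
  · intro z _
    funext i
    have := i.2
    simp only [Subtype.restrict]
    rw [dif_neg (by omega)]
  · intro ω hω
    simp only [Finset.mem_filter, Finset.mem_univ, true_and] at hω
    funext i
    split_ifs with h
    · rw [← hω]; rfl
    · rfl

lemma winMatrix_eq_jointMatrix {a c b : ℕ} (hac : a ≤ c) (hcb : c ≤ b) :
    winMatrix p a c b = jointMatrix p (Subtype.restrict fun i : Fin d => a ≤ (i : ℕ) ∧ (i : ℕ) < c)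
      (Subtype.restrict fun i : Fin d => c ≤ (i : ℕ) ∧ (i : ℕ) < b) := by
  ext u v
  refine Finset.sum_nbij' (fun z i => if h1 : a ≤ (i : ℕ) ∧ (i : ℕ) < c then u ⟨i, h1⟩
      else if h2 : c ≤ (i : ℕ) ∧ (i : ℕ) < b then v ⟨i, h2⟩ else z ⟨i, by omega⟩)
    (fun ω => Subtype.restrict _ ω) ?_ (by simp) ?_ ?_ (fun _ _ => rfl)
  · intro z _
    simp only [Finset.mem_filter, Finset.mem_univ, true_and, Prod.mk.injEq]
    constructor <;> funext i <;> have := i.2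
    · simp [Subtype.restrict, this]
    · simp only [Subtype.restrict]
      rw [dif_neg (by omega), dif_pos this]
  · intro z _
    funext i
    have := i.2
    simp only [Subtype.restrict]
    rw [dif_neg (by omega), dif_neg (by omega)]
  · intro ω hω
    simp only [Finset.mem_filter, Finset.mem_univ, true_and, Prod.mk.injEq] at hω
    funext i
    split_ifs with h1 h2
    · rw [← hω.1]; rfl
    · rw [← hω.2]; rfl
    · rfl

lemma unfold_eq_jointMatrix {c : ℕ} (hc : c ≤ d) :
    unfold p c = jointMatrix p (Fin.take c hc) (Subtype.restrict fun i : Fin d => c ≤ (i : ℕ)) := by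
  ext x y
  have h := jointMatrix_apply_eq_self (p := p) (readsExactly_take hc) (readsExactly_restrict _)
    (fun _ => Nat.lt_or_ge _ _) (glue x y)
  rw [take_glue, restrict_glue] at h
  exact h.symm

-- For `k = 1` and `k = d` the identity holds for any `p`, since one of the marginals is `p` itself.
lemma IsMarkov.mul_marg_eq (hp : IsMarkov p) {k : ℕ} (hk1 : 1 ≤ k) (hkd : k ≤ d)
    (ω : PreIdx n d) :
    p ω * marg p (fun i => k - 1 ≤ (i : ℕ) ∧ (i : ℕ) < k) ω =
      marg p (fun i => (i : ℕ) < k) ω * marg p (fun i => k - 1 ≤ (i : ℕ)) ω := by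
  rcases Nat.lt_or_ge k 2 with hk | hk
  · obtain rfl : k = 1 := by omega
    rw [marg_eq_self (fun _ => Nat.zero_le _), mul_comm,
      marg_congr (S := fun i => 1 - 1 ≤ (i : ℕ) ∧ (i : ℕ) < 1) (T := fun i => (i : ℕ) < 1)
        (fun i => by omega)]
  rcases Nat.lt_or_ge k d with hk' | hk'
  · have h := hp.2.2 k hk (by omega) ω
    simp only [winMarg_eq_law] at h
    rw [marg_congr (S := fun i => (i : ℕ) < k) (T := fun i => 0 ≤ (i : ℕ) ∧ (i : ℕ) < k)
        (fun i => by omega),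
      marg_congr (S := fun i => k - 1 ≤ (i : ℕ)) (T := fun i => k - 1 ≤ (i : ℕ) ∧ (i : ℕ) < d)
        (fun i => by have := i.isLt; omega)]
    exact h
  · obtain rfl : k = d := by omega
    rw [marg_eq_self (fun i => i.isLt),
      marg_congr (S := fun i => k - 1 ≤ (i : ℕ) ∧ (i : ℕ) < k) (T := fun i => k - 1 ≤ (i : ℕ))
        (fun i => by have := i.isLt; omega)]

lemma condIndep_of_mul_marg_eq {R S C : Type*} [DecidableEq R] [DecidableEq S] [DecidableEq C]
    {f : PreIdx n d → R} {h : R → S} {g : PreIdx n d → C} {F H G U : Fin d → Prop}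
    [DecidablePred F] [DecidablePred H] [DecidablePred U]
    (hf : ReadsExactly f F) (hhf : ReadsExactly (h ∘ f) H) (hg : ReadsExactly g G)
    (hFG : ∀ i, F i ∨ G i) (hU : ∀ i, U i ↔ H i ∨ G i)
    (hsurj : ∀ r c, ∃ ω, f ω = r ∧ g ω = c)
    (hmarg : ∀ ω, p ω * marg p H ω = marg p F ω * marg p U ω) : CondIndep p f h g := by
  intro r c
  obtain ⟨ω, rfl, rfl⟩ := hsurj r c
  have hjoint := (hhf.prod hg hU).law_eq_marg (p := p) ω
  have hcoarse := hhf.law_eq_marg (p := p) ω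
  simp only [Function.comp_apply] at hjoint hcoarse
  rw [jointMatrix_apply_eq_self hf hg hFG, hf.law_eq_marg, jointMatrix, Matrix.of_apply]
  simp only [Function.comp_apply]
  rw [hjoint, hcoarse]
  exact hmarg ω

lemma IsMarkov.condIndep_prefix_suffix (hp : IsMarkov p) {c : ℕ} (hc1 : 1 ≤ c) (hcd : c ≤ d) :
    CondIndep p (Fin.take c hcd)
      (restrictPrefix (fun i : Fin d => c - 1 ≤ (i : ℕ) ∧ (i : ℕ) < c) fun _ h => h.2)
      (Subtype.restrict fun i : Fin d => c ≤ (i : ℕ)) :=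
  condIndep_of_mul_marg_eq (readsExactly_take hcd) (readsExactly_restrict _)
    (readsExactly_restrict _) (fun _ => Nat.lt_or_ge _ _) (U := fun i => c - 1 ≤ (i : ℕ))
    (fun _ => by omega) (exists_take_eq_and_restrict_eq hcd) (hp.mul_marg_eq hc1 hcd)

lemma IsMarkov.condIndep_suffix_prefix (hp : IsMarkov p) {c : ℕ} (hcd : c + 1 ≤ d) :
    CondIndep p (Subtype.restrict fun i : Fin d => c ≤ (i : ℕ))
      (Subtype.restrict₂ (β := fun i : Fin d => Fin (n i))
        (p := fun i : Fin d => c ≤ (i : ℕ) ∧ (i : ℕ) < c + 1) fun _ h => h.1)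
      (Fin.take c (by omega)) := by
  refine condIndep_of_mul_marg_eq (readsExactly_restrict _) (readsExactly_restrict _)
    (readsExactly_take _) (fun _ => (Nat.lt_or_ge _ _).symm) (U := fun i => (i : ℕ) < c + 1)
    (fun _ => by omega) (fun y x => (exists_take_eq_and_restrict_eq _ x y).imp fun _ => And.symm)
    fun ω => ?_
  have h := hp.mul_marg_eq (k := c + 1) le_add_self hcd ω
  simp only [Nat.add_sub_cancel] at h
  rw [h, mul_comm]

lemma mrank_winMatrix_le_of_le {a a' c b : ℕ} (ha : a ≤ a') (hac : a' ≤ c) (hcb : c ≤ b) :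
    mrank (winMatrix p a' c b) ≤ mrank (winMatrix p a c b) := by
  have h := rank_jointMatrix_comp_left_le (p := p)
    (Subtype.restrict fun i : Fin d => a ≤ (i : ℕ) ∧ (i : ℕ) < c)
    (Subtype.restrict fun i : Fin d => c ≤ (i : ℕ) ∧ (i : ℕ) < b)
    (Subtype.restrict₂ (β := fun i : Fin d => Fin (n i))
      (p := fun i : Fin d => a' ≤ (i : ℕ) ∧ (i : ℕ) < c) fun _ h => ⟨ha.trans h.1, h.2⟩)
  rw [Subtype.restrict₂_comp_restrict] at h
  rwa [mrank_eq_rank, mrank_eq_rank, winMatrix_eq_jointMatrix hac hcb,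
    winMatrix_eq_jointMatrix (ha.trans hac) hcb]

lemma mrank_winMatrix_le_mrank_unfold {a c b : ℕ} (hac : a ≤ c) (hcb : c ≤ b) (hbd : b ≤ d) :
    mrank (winMatrix p a c b) ≤ mrank (unfold p c) := by
  have hcd := hcb.trans hbd
  have hrows := rank_jointMatrix_comp_left_le (p := p) (Fin.take c hcd)
    (Subtype.restrict fun i : Fin d => c ≤ (i : ℕ) ∧ (i : ℕ) < b)
    (restrictPrefix (fun i : Fin d => a ≤ (i : ℕ) ∧ (i : ℕ) < c) fun _ h => h.2)
  have hcols := rank_jointMatrix_comp_right_le (p := p) (Fin.take c hcd)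
    (Subtype.restrict fun i : Fin d => c ≤ (i : ℕ))
    (Subtype.restrict₂ (β := fun i : Fin d => Fin (n i))
      (p := fun i : Fin d => c ≤ (i : ℕ) ∧ (i : ℕ) < b) fun _ h => h.1)
  rw [restrictPrefix_comp_take] at hrows
  rw [Subtype.restrict₂_comp_restrict] at hcols
  rw [mrank_eq_rank, mrank_eq_rank, winMatrix_eq_jointMatrix hac hcb, unfold_eq_jointMatrix hcd]
  exact hrows.trans hcols

theorem IsMarkov.mrank_unfold_eq_mrank_winMatrix (hp : IsMarkov p) {c : ℕ} (hc1 : 1 ≤ c)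
    (hcd : c + 1 ≤ d) : mrank (unfold p c) = mrank (winMatrix p (c - 1) c (c + 1)) := by
  have hcols := rank_jointMatrix_comp_right_of_condIndep hp.1 (hp.condIndep_suffix_prefix hcd)
  have hrows := rank_jointMatrix_comp_left_of_condIndep hp.1
    (hp.condIndep_prefix_suffix hc1 (by omega)) (Subtype.restrict₂ (β := fun i : Fin d => Fin (n i))
      (p := fun i : Fin d => c ≤ (i : ℕ) ∧ (i : ℕ) < c + 1) fun _ h => h.1)
  rw [Subtype.restrict₂_comp_restrict] at hcols hrows
  rw [restrictPrefix_comp_take] at hrows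
  rw [mrank_eq_rank, mrank_eq_rank, unfold_eq_jointMatrix (by omega),
    winMatrix_eq_jointMatrix (by omega) (Nat.le_add_right c 1), ← hcols, ← hrows]

end Configurations

/-- In 0-based indexing the split position is `c = k`; the pair marginal is the window
`[c-1, c+1)` and the triple marginal the window `[c-2, c+1)`, both split at `c`. -/
theorem markov_unfolding_rank
    (d : ℕ) (n : ℕ → ℕ) (p : PreIdx n d → ℝ) (hp : IsMarkov p)
    (c : ℕ) (hc1 : 1 ≤ c) (hc2 : c ≤ d - 1) :
    mrank (unfold p c) = mrank (winMatrix p (c - 1) c (c + 1)) ∧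
      (2 ≤ c → mrank (unfold p c) = mrank (winMatrix p (c - 2) c (c + 1))) := by
  have hpair := hp.mrank_unfold_eq_mrank_winMatrix hc1 (by omega)
  refine ⟨hpair, fun hc => le_antisymm ?_ ?_⟩
  · exact hpair.trans_le (mrank_winMatrix_le_of_le (by omega) (by omega) (Nat.le_add_right c 1))
  · exact mrank_winMatrix_le_mrank_unfold (by omega) (Nat.le_add_right c 1) (by omega)
end
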